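/- arXiv:2312.13389 — 5 statements merged into one kernel-verified Lean document; each statement's English description precedes it below -/
import Mathlib

section
/- For integers n ≥ 1, b ≥ m ≥ 1, the probability that a fixed element appears in the final subsample of MUSTwo equals that of sampling with replacement: ∑_{j=1}^{b} C(b,j) (1/n)^j (1 − 1/n)^{b−j} · (1 − C(b−j, m)/C(b, m)) = 1 − (1 − 1/n)^m, where C(b−j, m) is taken to be 0 when b − j < m. -/
/-!
With `p = 1/n` and `q = 1 - p`, the identity `C(b,j) C(b-j,m) = C(b,m) C(b-m,j)` (choose `j` marked
and `m` surviving elements out of `b`, in either order) splits the `j`-th summand into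
`C(b,j) p^j q^(b-j) - C(b-m,j) p^j q^(b-j)`. Both sums are binomial expansions, of
`(p + q)^b = 1` and of `q^m (p + q)^(b-m) = q^m`; the `j = 0` summand of the original sum vanishes.
-/

open Finset

theorem Nat.choose_mul_choose_sub (b m j : ℕ) :
    b.choose j * (b - j).choose m = b.choose m * (b - m).choose j := by
  rcases le_or_gt (j + m) b with h | h
  · have := Nat.choose_mul (n := b) (k := b - j) (s := m) (by omega)
    rwa [Nat.choose_symm (by omega), show b - j - m = b - m - j by omega,
      Nat.choose_symm (by omega)] at this
  rcases le_or_gt m b with hmb | hmb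
  · rw [Nat.choose_eq_zero_of_lt (n := b - m) (by omega), mul_zero]
    rcases le_or_gt j b with hjb | hjb
    · rw [Nat.choose_eq_zero_of_lt (n := b - j) (by omega), mul_zero]
    · rw [Nat.choose_eq_zero_of_lt hjb, zero_mul]
  · rw [Nat.choose_eq_zero_of_lt hmb, zero_mul, Nat.choose_eq_zero_of_lt (n := b - j) (by omega),
      mul_zero]

theorem sum_range_choose_sub_mul_pow_mul_pow {R : Type*} [CommSemiring R] (p q : R)
    {m b : ℕ} (hmb : m ≤ b) :
    ∑ j ∈ range (b + 1), ((b - m).choose j : R) * p ^ j * q ^ (b - j) =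
      q ^ m * (p + q) ^ (b - m) := by
  have hsupp : ∀ j ∈ range (b + 1), j ∉ range (b - m + 1) →
      ((b - m).choose j : R) * p ^ j * q ^ (b - j) = 0 := fun j _ hj => by
    rw [Nat.choose_eq_zero_of_lt (by simpa using hj), Nat.cast_zero, zero_mul, zero_mul]
  rw [← sum_subset (range_subset_range.mpr (by omega)) hsupp, add_pow, mul_sum]
  refine sum_congr rfl fun j hj => ?_
  rw [show b - j = b - m - j + m by simp at hj; omega, pow_add]
  ring

theorem sum_range_choose_mul_pow_mul_pow_mul_one_sub_choose_div {K : Type*} [Field K]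
    [CharZero K] (p q : K) (hpq : p + q = 1) {m b : ℕ} (hmb : m ≤ b) :
    ∑ j ∈ range (b + 1),
      (b.choose j : K) * p ^ j * q ^ (b - j) * (1 - ((b - j).choose m : K) / b.choose m)
      = 1 - q ^ m := by
  have hchoose : (b.choose m : K) ≠ 0 := Nat.cast_ne_zero.mpr (Nat.choose_pos hmb).ne'
  have hterm : ∀ j, (b.choose j : K) * p ^ j * q ^ (b - j) *
      (1 - ((b - j).choose m : K) / b.choose m) =
      (b.choose j : K) * p ^ j * q ^ (b - j) - ((b - m).choose j : K) * p ^ j * q ^ (b - j) := by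
    intro j
    have h := congrArg (Nat.cast (R := K)) (Nat.choose_mul_choose_sub b m j)
    push_cast at h
    field_simp
    linear_combination -p ^ j * q ^ (b - j) * h
  have hbinom := sum_range_choose_sub_mul_pow_mul_pow p q (Nat.zero_le b)
  simp only [Nat.sub_zero, pow_zero, one_mul] at hbinom
  rw [sum_congr rfl fun j _ => hterm j, sum_sub_distrib, hbinom,
    sum_range_choose_sub_mul_pow_mul_pow p q hmb, hpq, one_pow, one_pow, mul_one]

theorem must_wo_eta_general (n b m : ℕ) (hmb : m ≤ b) :
    ∑ j ∈ Finset.Icc 1 b,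
      (b.choose j : ℝ) * (1 / n) ^ j * (1 - 1 / n) ^ (b - j) *
        (1 - ((b - j).choose m : ℝ) / (b.choose m : ℝ))
      = 1 - (1 - 1 / (n : ℝ)) ^ m := by
  rw [← sum_range_choose_mul_pow_mul_pow_mul_one_sub_choose_div (1 / n : ℝ) _
    (add_sub_cancel _ 1) hmb, range_eq_Ico, sum_eq_sum_Ico_succ_bot b.succ_pos, zero_add,
    Nat.succ_eq_add_one, Ico_add_one_right_eq_Icc]
  simp [(Nat.choose_pos hmb).ne']

theorem must_wo_eta (n b m : ℕ) (hn : 1 ≤ n) (hm : 1 ≤ m) (hmb : m ≤ b) :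
    ∑ j ∈ Finset.Icc 1 b,
      (b.choose j : ℝ) * (1 / n) ^ j * (1 - 1 / n) ^ (b - j) *
        (1 - ((b - j).choose m : ℝ) / (b.choose m : ℝ))
      = 1 - (1 - 1 / (n : ℝ)) ^ m :=
  must_wo_eta_general n b m hmb
end

section
/- For integers n ≥ 1 and m ≥ 1, define f(b) = (b/n)(1 − (1 − 1/b)^m) for real b ∈ [1, n]. Then f is increasing on [1, n]; consequently f(b) ≤ f(n) = 1 − (1 − 1/n)^m for all b ∈ [1, n], with equality only when b = n (or m = 1 trivially). -/
/-! Writing `x = 1 - 1/b`, the geometric sum `(1 - x) ∑_{k<m} x^k = 1 - x^m` gives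
`b (1 - (1 - 1/b)^m) = ∑_{k<m} (1 - 1/b)^k`. Each summand is monotone in `b ≥ 1`, and the
summand `k = 1` is strictly increasing, so `f` is monotone on `[1, n]` and, for `m ≥ 2`,
strictly so; hence `f b ≤ f n` with equality only at `b = n`. -/

open Finset Set

lemma mul_one_sub_one_sub_one_div_pow {b : ℝ} (hb : b ≠ 0) (m : ℕ) :
    b * (1 - (1 - 1 / b) ^ m) = ∑ k ∈ range m, (1 - 1 / b) ^ k := by
  rw [← mul_neg_geom_sum, sub_sub_cancel, ← mul_assoc, mul_one_div_cancel hb, one_mul]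

lemma monotoneOn_one_sub_one_div_pow (k : ℕ) :
    MonotoneOn (fun b : ℝ => (1 - 1 / b) ^ k) (Ici 1) := by
  intro a ha b _ hab
  have ha0 : 0 < a := one_pos.trans_le ha
  have hnonneg : 0 ≤ 1 - 1 / a := sub_nonneg.mpr ((div_le_one ha0).mpr ha)
  exact pow_le_pow_left₀ hnonneg (sub_le_sub_left (one_div_le_one_div_of_le ha0 hab) 1) k

lemma monotoneOn_mul_one_sub_one_sub_one_div_pow (m : ℕ) :
    MonotoneOn (fun b : ℝ => b * (1 - (1 - 1 / b) ^ m)) (Ici 1) := by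
  intro a ha b hb hab
  simp only
  rw [mul_one_sub_one_sub_one_div_pow (one_pos.trans_le ha).ne',
    mul_one_sub_one_sub_one_div_pow (one_pos.trans_le hb).ne']
  exact sum_le_sum fun k _ => monotoneOn_one_sub_one_div_pow k ha hb hab

lemma strictMonoOn_mul_one_sub_one_sub_one_div_pow {m : ℕ} (hm : 2 ≤ m) :
    StrictMonoOn (fun b : ℝ => b * (1 - (1 - 1 / b) ^ m)) (Ici 1) := by
  intro a ha b hb hab
  have ha0 : 0 < a := one_pos.trans_le ha
  simp only
  rw [mul_one_sub_one_sub_one_div_pow ha0.ne',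
    mul_one_sub_one_sub_one_div_pow (one_pos.trans_le hb).ne']
  refine sum_lt_sum (fun k _ => monotoneOn_one_sub_one_div_pow k ha hb hab.le)
    ⟨1, mem_range.mpr hm, ?_⟩
  simpa only [pow_one] using sub_lt_sub_left (one_div_lt_one_div_of_lt ha0 hab) 1

theorem must_ow_eta_monotone_general (n m : ℕ) (hm : 1 ≤ m)
    (f : ℝ → ℝ) (hf : ∀ b : ℝ, f b = (b / n) * (1 - (1 - 1 / b) ^ m)) :
    MonotoneOn f (Set.Icc (1 : ℝ) (n : ℝ)) ∧
      (∀ b ∈ Set.Icc (1 : ℝ) (n : ℝ),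
        f b ≤ 1 - (1 - 1 / (n : ℝ)) ^ m ∧
        (f b = 1 - (1 - 1 / (n : ℝ)) ^ m → b = (n : ℝ) ∨ m = 1)) := by
  set g : ℝ → ℝ := fun b => b * (1 - (1 - 1 / b) ^ m)
  have hfg : ∀ b, f b = g b / n := fun b => by rw [hf]; ring
  have hmono : MonotoneOn f (Icc 1 n) := fun a ha b hb hab => by
    rw [hfg, hfg]
    exact div_le_div_of_nonneg_right
      (monotoneOn_mul_one_sub_one_sub_one_div_pow m ha.1 hb.1 hab) n.cast_nonneg
  refine ⟨hmono, fun b hb => ?_⟩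
  have hn : (0 : ℝ) < n := one_pos.trans_le (hb.1.trans hb.2)
  have hfn : f n = 1 - (1 - 1 / (n : ℝ)) ^ m := by rw [hf, div_self hn.ne', one_mul]
  rw [← hfn]
  refine ⟨hmono hb ⟨hb.1.trans hb.2, le_rfl⟩ hb.2, fun heq => ?_⟩
  rcases (by omega : m = 1 ∨ 2 ≤ m) with hm1 | hm2
  · exact Or.inr hm1
  · rw [hfg, hfg, div_left_inj' hn.ne'] at heq
    exact Or.inl ((strictMonoOn_mul_one_sub_one_sub_one_div_pow hm2).injOn
      hb.1 (hb.1.trans hb.2 : (1 : ℝ) ≤ n) heq)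

theorem must_ow_eta_monotone (n m : ℕ) (hn : 1 ≤ n) (hm : 1 ≤ m)
    (f : ℝ → ℝ) (hf : ∀ b : ℝ, f b = (b / n) * (1 - (1 - 1 / b) ^ m)) :
    MonotoneOn f (Set.Icc (1 : ℝ) (n : ℝ)) ∧
      (∀ b ∈ Set.Icc (1 : ℝ) (n : ℝ),
        f b ≤ 1 - (1 - 1 / (n : ℝ)) ^ m ∧
        (f b = 1 - (1 - 1 / (n : ℝ)) ^ m → b = (n : ℝ) ∨ m = 1)) :=
  must_ow_eta_monotone_general n m hm f hf
end

section
/- For integers n ≥ 1, 1 ≤ b < n, and m ≥ 2, the following strict chain of inequalities holds: (b/n)(1 − (1 − 1/b)^m) < 1 − (1 − 1/n)^m < m/n. -/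
/-! Writing `1 - (1 - 1/x)^m = (1/x) ∑_{i<m} (1 - 1/x)^i`, both inequalities compare geometric
sums `∑_{i<m} r^i` at the ratios `1 - 1/b < 1 - 1/n < 1`; for `m ≥ 2` such a sum is strictly
increasing in `r ≥ 0` because its term `r^1` is. -/

open Finset

lemma geom_sum_lt_geom_sum {R : Type*} [Semiring R] [PartialOrder R] [IsStrictOrderedRing R]
    {x y : R} (hx : 0 ≤ x) (hxy : x < y) {m : ℕ} (hm : 2 ≤ m) :
    ∑ i ∈ range m, x ^ i < ∑ i ∈ range m, y ^ i :=
  sum_lt_sum (fun i _ => pow_le_pow_left₀ hx hxy.le i)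
    ⟨1, mem_range.mpr (by omega), by simpa using hxy⟩

lemma one_sub_one_sub_pow_eq_mul_geom_sum {R : Type*} [CommRing R] (t : R) (m : ℕ) :
    1 - (1 - t) ^ m = t * ∑ i ∈ range m, (1 - t) ^ i := by
  rw [← mul_neg_geom_sum, sub_sub_cancel]

lemma one_sub_one_div_nonneg {K : Type*} [Field K] [LinearOrder K] [IsStrictOrderedRing K]
    {x : K} (hx : 1 ≤ x) : 0 ≤ 1 - 1 / x :=
  sub_nonneg.mpr ((div_le_one (zero_lt_one.trans_le hx)).mpr hx)

theorem eta_chain_general (n b m : ℕ) (hb : 1 ≤ b) (hbn : b < n) (hm : 2 ≤ m) :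
    ((b : ℝ) / n) * (1 - (1 - 1 / (b : ℝ)) ^ m) < 1 - (1 - 1 / (n : ℝ)) ^ m ∧
      1 - (1 - 1 / (n : ℝ)) ^ m < (m : ℝ) / n := by
  have hb1 : (1 : ℝ) ≤ b := by exact_mod_cast hb
  have hbnR : (b : ℝ) < n := by exact_mod_cast hbn
  have hb0 : (0 : ℝ) < b := zero_lt_one.trans_le hb1
  have hn0 : (0 : ℝ) < n := hb0.trans hbnR
  have hsum_b : ∑ i ∈ range m, (1 - 1 / (b : ℝ)) ^ i < ∑ i ∈ range m, (1 - 1 / (n : ℝ)) ^ i :=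
    geom_sum_lt_geom_sum (one_sub_one_div_nonneg hb1)
      (sub_lt_sub_left (one_div_lt_one_div_of_lt hb0 hbnR) 1) hm
  have hsum_n : ∑ i ∈ range m, (1 - 1 / (n : ℝ)) ^ i < m := by
    simpa using geom_sum_lt_geom_sum (one_sub_one_div_nonneg (hb1.trans hbnR.le))
      (sub_lt_self 1 (one_div_pos.mpr hn0)) hm
  rw [one_sub_one_sub_pow_eq_mul_geom_sum, one_sub_one_sub_pow_eq_mul_geom_sum]
  constructor
  · calc (b : ℝ) / n * (1 / b * ∑ i ∈ range m, (1 - 1 / (b : ℝ)) ^ i)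
          = 1 / n * ∑ i ∈ range m, (1 - 1 / (b : ℝ)) ^ i := by field_simp
      _ < 1 / n * ∑ i ∈ range m, (1 - 1 / (n : ℝ)) ^ i := by gcongr
  · calc 1 / (n : ℝ) * ∑ i ∈ range m, (1 - 1 / (n : ℝ)) ^ i < 1 / n * m := by gcongr
      _ = m / n := one_div_mul_eq_div _ _

theorem eta_chain (n b m : ℕ) (hn : 1 ≤ n) (hb : 1 ≤ b) (hbn : b < n) (hm : 2 ≤ m) :
    ((b : ℝ) / n) * (1 - (1 - 1 / (b : ℝ)) ^ m) < 1 - (1 - 1 / (n : ℝ)) ^ m ∧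
      1 - (1 - 1 / (n : ℝ)) ^ m < (m : ℝ) / n :=
  eta_chain_general n b m hb hbn hm
end

section
/- Let θ > 0. The Gaussian privacy profile δ(ε) = Φ(θ/2 − ε/θ) − e^ε Φ(−θ/2 − ε/θ), where Φ is the standard normal CDF, satisfies 0 < δ(ε) < 1 for all ε ≥ 0, and δ(ε) is strictly decreasing in ε. -/
noncomputable def stdNormalCDF (x : ℝ) : ℝ :=
  ∫ t in Set.Iic x, (Real.sqrt (2 * Real.pi))⁻¹ * Real.exp (-t ^ 2 / 2)

/-!
Write `φ` for the standard normal density and `b = -θ/2 - ε/θ`, so that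
`δ(ε) = Φ(b + θ) - exp ε · Φ(b)`. The likelihood ratio `φ(t + θ) / φ(t) = exp(-θt - θ²/2)` equals
`exp ε` exactly at `t = b`, hence `δ(ε) = ∫_{t ≤ b} (φ(t + θ) - exp ε · φ(t)) dt` has an integrand
that is positive for `t < b` when `θ > 0`. The same identity `exp ε · φ(b) = φ(b + θ)` makes the
density terms cancel on differentiating, leaving `δ'(ε) = -exp ε · Φ(b) < 0`.
-/

open MeasureTheory ProbabilityTheory Real Set

theorem setIntegral_Iic_comp_add_right {E : Type*} [NormedAddCommGroup E] [NormedSpace ℝ E]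
    (f : ℝ → E) (a c : ℝ) : ∫ t in Iic a, f (t + c) = ∫ t in Iic (a + c), f t := by
  have h := (measurePreserving_add_right volume c).setIntegral_preimage_emb
    (measurableEmbedding_addRight c) f (Iic (a + c))
  rwa [preimage_add_const_Iic, add_sub_cancel_right] at h

theorem hasDerivAt_setIntegral_Iic {E : Type*} [NormedAddCommGroup E] [NormedSpace ℝ E]
    [CompleteSpace E] {f : ℝ → E} (hf : Continuous f) (hfi : Integrable f) (x : ℝ) :
    HasDerivAt (fun x => ∫ t in Iic x, f t) (f x) x := by
  have h : (fun x => ∫ t in Iic x, f t) =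
      fun x => (∫ t in Iic 0, f t) + ∫ t in (0 : ℝ)..x, f t := by
    funext x
    rw [← intervalIntegral.integral_Iic_sub_Iic hfi.integrableOn hfi.integrableOn, add_sub_cancel]
  rw [h]
  exact (intervalIntegral.integral_hasDerivAt_right hfi.intervalIntegrable
    (hf.stronglyMeasurableAtFilter _ _) hf.continuousAt).const_add _

theorem stdNormalCDF_eq_setIntegral_gaussianPDFReal (x : ℝ) :
    stdNormalCDF x = ∫ t in Iic x, gaussianPDFReal 0 1 t := by
  simp only [stdNormalCDF, gaussianPDFReal, NNReal.coe_one, mul_one, sub_zero]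

theorem gaussianPDFReal_zero_one_add (t c : ℝ) :
    gaussianPDFReal 0 1 (t + c) = exp (-(c * t) - c ^ 2 / 2) * gaussianPDFReal 0 1 t := by
  simp only [gaussianPDFReal, NNReal.coe_one, mul_one, sub_zero]
  rw [mul_left_comm, ← exp_add]
  ring_nf

theorem stdNormalCDF_pos (x : ℝ) : 0 < stdNormalCDF x := by
  rw [stdNormalCDF_eq_setIntegral_gaussianPDFReal, setIntegral_pos_iff_support_of_nonneg_ae
    (ae_of_all _ (gaussianPDFReal_nonneg 0 1)) (integrable_gaussianPDFReal 0 1).integrableOn]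
  rw [Function.support_eq_univ (fun t => (gaussianPDFReal_pos 0 1 t one_ne_zero).ne'), univ_inter]
  simp

theorem stdNormalCDF_le_one (x : ℝ) : stdNormalCDF x ≤ 1 := by
  rw [stdNormalCDF_eq_setIntegral_gaussianPDFReal, ← integral_gaussianPDFReal_eq_one 0 one_ne_zero]
  exact setIntegral_le_integral (integrable_gaussianPDFReal 0 1)
    (ae_of_all _ (gaussianPDFReal_nonneg 0 1))

theorem hasDerivAt_stdNormalCDF (x : ℝ) : HasDerivAt stdNormalCDF (gaussianPDFReal 0 1 x) x := by
  rw [funext stdNormalCDF_eq_setIntegral_gaussianPDFReal]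
  exact hasDerivAt_setIntegral_Iic (by unfold gaussianPDFReal; fun_prop)
    (integrable_gaussianPDFReal 0 1) x

noncomputable def gaussianProfile (θ ε : ℝ) : ℝ :=
  stdNormalCDF (θ / 2 - ε / θ) - exp ε * stdNormalCDF (-θ / 2 - ε / θ)

theorem gaussianProfile_pos {θ : ℝ} (hθ : 0 < θ) (ε : ℝ) : 0 < gaussianProfile θ ε := by
  set b := -θ / 2 - ε / θ
  have hφ := integrable_gaussianPDFReal 0 1
  have hint : Integrable fun t => gaussianPDFReal 0 1 (t + θ) - exp ε * gaussianPDFReal 0 1 t :=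
    (hφ.comp_add_right θ).sub (hφ.const_mul _)
  have hprofile : gaussianProfile θ ε =
      ∫ t in Iic b, (gaussianPDFReal 0 1 (t + θ) - exp ε * gaussianPDFReal 0 1 t) := by
    rw [integral_sub (hφ.comp_add_right θ).integrableOn (hφ.const_mul _).integrableOn,
      integral_const_mul, setIntegral_Iic_comp_add_right,
      ← stdNormalCDF_eq_setIntegral_gaussianPDFReal, ← stdNormalCDF_eq_setIntegral_gaussianPDFReal,
      gaussianProfile, show θ / 2 - ε / θ = b + θ by ring]
  have hθb : -(θ * b) - θ ^ 2 / 2 = ε := by simp only [b]; field_simp; ring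
  have hgap : ∀ t, gaussianPDFReal 0 1 (t + θ) - exp ε * gaussianPDFReal 0 1 t =
      (exp (-(θ * t) - θ ^ 2 / 2) - exp ε) * gaussianPDFReal 0 1 t := fun t => by
    rw [gaussianPDFReal_zero_one_add]; ring
  rw [hprofile, setIntegral_pos_iff_support_of_nonneg_ae _ hint.integrableOn]
  · calc (0 : ENNReal) < volume (Iio b) := by simp
      _ ≤ _ := measure_mono fun t (ht : t < b) => by
        refine ⟨ne_of_gt ?_, le_of_lt ht⟩
        dsimp only
        rw [hgap]
        refine mul_pos (sub_pos.2 (exp_lt_exp.2 ?_)) (gaussianPDFReal_pos 0 1 t one_ne_zero)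
        rw [← hθb]; gcongr
  · filter_upwards [ae_restrict_mem measurableSet_Iic] with t (ht : t ≤ b)
    rw [Pi.zero_apply, hgap]
    refine mul_nonneg (sub_nonneg.2 (exp_le_exp.2 ?_)) (gaussianPDFReal_nonneg 0 1 t)
    rw [← hθb]; gcongr

theorem gaussianProfile_lt_one (θ ε : ℝ) : gaussianProfile θ ε < 1 :=
  calc gaussianProfile θ ε < stdNormalCDF (θ / 2 - ε / θ) :=
        sub_lt_self _ (mul_pos (exp_pos ε) (stdNormalCDF_pos _))
    _ ≤ 1 := stdNormalCDF_le_one _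

theorem hasDerivAt_gaussianProfile {θ : ℝ} (hθ : θ ≠ 0) (ε : ℝ) :
    HasDerivAt (gaussianProfile θ) (-(exp ε * stdNormalCDF (-θ / 2 - ε / θ))) ε := by
  have hlin : ∀ c, HasDerivAt (fun ε : ℝ => c - ε / θ) (-θ⁻¹) ε := fun c => by
    simpa using ((hasDerivAt_id ε).div_const θ).const_sub c
  have h := ((hasDerivAt_stdNormalCDF _).comp ε (hlin (θ / 2))).sub
    ((hasDerivAt_exp ε).mul ((hasDerivAt_stdNormalCDF _).comp ε (hlin (-θ / 2))))
  refine HasDerivAt.congr_deriv (f := gaussianProfile θ) h ?_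
  have hshift : θ / 2 - ε / θ = (-θ / 2 - ε / θ) + θ := by ring
  rw [hshift, gaussianPDFReal_zero_one_add, show -(θ * (-θ / 2 - ε / θ)) - θ ^ 2 / 2 = ε by
    field_simp; ring, Function.comp_apply]
  ring

theorem gaussianProfile_strictAnti {θ : ℝ} (hθ : θ ≠ 0) : StrictAnti (gaussianProfile θ) :=
  strictAnti_of_hasDerivAt_neg (hasDerivAt_gaussianProfile hθ)
    fun ε => neg_neg_of_pos (mul_pos (exp_pos ε) (stdNormalCDF_pos _))

theorem gaussian_privacy_profile (θ : ℝ) (hθ : 0 < θ)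
    (δ : ℝ → ℝ)
    (hδ : ∀ ε, δ ε = stdNormalCDF (θ / 2 - ε / θ) -
        Real.exp ε * stdNormalCDF (-θ / 2 - ε / θ)) :
    (∀ ε : ℝ, 0 ≤ ε → 0 < δ ε ∧ δ ε < 1) ∧
    StrictAntiOn δ (Set.Ici (0 : ℝ)) := by
  obtain rfl : δ = gaussianProfile θ := funext hδ
  exact ⟨fun ε _ => ⟨gaussianProfile_pos hθ ε, gaussianProfile_lt_one θ ε⟩,
    (gaussianProfile_strictAnti hθ.ne').strictAntiOn _⟩
end

section
/- For integers n ≥ 1, b ≥ 1, 1 ≤ u ≤ m ≤ b: ∑_{j=u}^{b} C(b,j) · [C(j,u) C(b−j, m−u) / C(b,m)] · (1/n)^j (1 − 1/n)^{b−j} = C(m,u) (1/n)^u (1 − 1/n)^{m−u}, where C(b−j, m−u) = 0 if b − j < m − u. -/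
/-!
Picking a `j`-subset of `b` points, a `u`-subset of it and an `(m - u)`-subset of its complement is
the same as picking an `m`-subset, a `u`-subset of it and a `(j - u)`-subset of its complement:
`C(b,j) C(j,u) C(b-j,m-u) = C(b,m) C(m,u) C(b-m,j-u)`. After this substitution the sum is
`C(b,m) C(m,u) x^u y^(m-u)` times the binomial expansion of `(x + y)^(b-m)`, and `x + y = 1`.
-/

open Finset

namespace Nat

theorem choose_mul_choose_sub_comm (N A B : ℕ) :
    N.choose A * (N - A).choose B = N.choose B * (N - B).choose A := by
  calc N.choose A * (N - A).choose B
      = N.choose (A + B) * (A + B).choose A := by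
        rw [choose_mul (le_add_right A B), Nat.add_sub_cancel_left]
    _ = N.choose (A + B) * (A + B).choose B := by rw [choose_symm_add]
    _ = N.choose B * (N - B).choose A := by
        rw [choose_mul (le_add_left B A), Nat.add_sub_cancel]

theorem choose_mul_choose_mul_choose_sub {b m u j : ℕ} (hum : u ≤ m) (huj : u ≤ j) :
    b.choose j * j.choose u * (b - j).choose (m - u) =
      b.choose m * m.choose u * (b - m).choose (j - u) := by
  have hbj : b - j = b - u - (j - u) := by omega
  have hbm : b - m = b - u - (m - u) := by omega
  rw [choose_mul huj, choose_mul hum, hbj, hbm, Nat.mul_assoc, Nat.mul_assoc,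
    choose_mul_choose_sub_comm]

end Nat

section CommSemiring

variable {R : Type*} [CommSemiring R] (x y : R)

theorem add_pow_eq_sum_range_of_lt {M L : ℕ} (hML : M < L) :
    (x + y) ^ M = ∑ k ∈ range L, x ^ k * y ^ (M - k) * M.choose k := by
  rw [add_pow]
  refine sum_subset (range_subset_range.2 hML) fun k _ hk => ?_
  rw [Nat.choose_eq_zero_of_lt (by simpa using hk), Nat.cast_zero, mul_zero]

theorem sum_Icc_choose_sub_mul_pow_mul_pow {b m u : ℕ} (hum : u ≤ m) (hmb : m ≤ b) :
    ∑ j ∈ Icc u b, ((b - m).choose (j - u) : R) * x ^ j * y ^ (b - j) =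
      x ^ u * y ^ (m - u) * (x + y) ^ (b - m) := by
  rw [← Ico_add_one_right_eq_Icc, sum_Ico_eq_sum_range,
    add_pow_eq_sum_range_of_lt x y (show b - m < b + 1 - u by omega), mul_sum]
  refine sum_congr rfl fun k _ => ?_
  rw [Nat.add_sub_cancel_left]
  rcases le_or_gt k (b - m) with hk | hk
  · rw [pow_add, show b - (u + k) = (m - u) + (b - m - k) by omega, pow_add]
    ring
  · rw [Nat.choose_eq_zero_of_lt hk]
    simp

theorem sum_Icc_choose_mul_choose_mul_choose_mul_pow_mul_pow {b m u : ℕ}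
    (hum : u ≤ m) (hmb : m ≤ b) :
    ∑ j ∈ Icc u b, (b.choose j * j.choose u * (b - j).choose (m - u) : R) * x ^ j * y ^ (b - j) =
      b.choose m * m.choose u * x ^ u * y ^ (m - u) * (x + y) ^ (b - m) := by
  have hterm : ∀ j ∈ Icc u b,
      (b.choose j * j.choose u * (b - j).choose (m - u) : R) * x ^ j * y ^ (b - j) =
        (b.choose m * m.choose u : R) * (((b - m).choose (j - u) : R) * x ^ j * y ^ (b - j)) := by
    intro j hj
    have hchoose := Nat.choose_mul_choose_mul_choose_sub (b := b) hum (mem_Icc.1 hj).1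
    rw [← mul_assoc, ← mul_assoc]
    exact_mod_cast congrArg (fun c : ℕ => (c : R) * x ^ j * y ^ (b - j)) hchoose
  rw [sum_congr rfl hterm, ← mul_sum, sum_Icc_choose_sub_mul_pow_mul_pow x y hum hmb]
  ring

end CommSemiring

theorem must_wo_binomial_step_general (n b m u : ℕ) (hum : u ≤ m) (hmb : m ≤ b) :
    ∑ j ∈ Finset.Icc u b,
        (b.choose j : ℝ) *
          ((j.choose u : ℝ) * ((b - j).choose (m - u) : ℝ) / (b.choose m : ℝ)) *
          (1 / n) ^ j * (1 - 1 / n) ^ (b - j)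
      = (m.choose u : ℝ) * (1 / n) ^ u * (1 - 1 / (n : ℝ)) ^ (m - u) := by
  have hchoose : (b.choose m : ℝ) ≠ 0 := by exact_mod_cast (Nat.choose_pos hmb).ne'
  have hsum := sum_Icc_choose_mul_choose_mul_choose_mul_pow_mul_pow (1 / n : ℝ) (1 - 1 / n) hum hmb
  rw [add_sub_cancel, one_pow, mul_one] at hsum
  calc _ = (∑ j ∈ Icc u b, (b.choose j * j.choose u * (b - j).choose (m - u) : ℝ) *
          (1 / n) ^ j * (1 - 1 / n) ^ (b - j)) / b.choose m := by
        rw [sum_div]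
        refine sum_congr rfl fun j _ => ?_
        ring
    _ = _ := by
        rw [hsum]
        field_simp

theorem must_wo_binomial_step (n b m u : ℕ) (hn : 1 ≤ n) (hb : 1 ≤ b)
    (hu : 1 ≤ u) (hum : u ≤ m) (hmb : m ≤ b) :
    ∑ j ∈ Finset.Icc u b,
        (b.choose j : ℝ) *
          ((j.choose u : ℝ) * ((b - j).choose (m - u) : ℝ) / (b.choose m : ℝ)) *
          (1 / n) ^ j * (1 - 1 / n) ^ (b - j)
      = (m.choose u : ℝ) * (1 / n) ^ u * (1 - 1 / (n : ℝ)) ^ (m - u) :=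
  must_wo_binomial_step_general n b m u hum hmb
end
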